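/- Let p, q > 0. Define t_0 = 1, t_k = (p + sqrt(q + 4·t_{k-1}²))/2 and a_k = (t_{k-1} - 1)/t_k. Then a_k converges to 1. -/

import Mathlib

/-!
For `x ≥ 0` the update `x ↦ (p + √(q + 4x²)) / 2` raises `x` by at least `p / 2` (as `√(q + 4x²) ≥ 2x`)
and by at most `(p + √q) / 2` (as `√(q + 4x²) ≤ √q + 2x`). Hence `t_k` grows at least linearly while
its increments stay bounded, so `t_k / t_{k+1} → 1` and `1 / t_{k+1} → 0`, and
`a_{k+1} = t_k / t_{k+1} - 1 / t_{k+1} → 1`.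
-/

open Filter Topology

lemma Real.sqrt_add_le_add_sqrt (x y : ℝ) : √(x + y) ≤ √x + √y := by
  rcases le_or_gt 0 (x + y) with hxy | hxy
  · have hx : x ≤ √x ^ 2 := Real.sq_sqrt' (x := x) ▸ le_max_left x 0
    have hy : y ≤ √y ^ 2 := Real.sq_sqrt' (x := y) ▸ le_max_left y 0
    rw [Real.sqrt_le_left (by positivity)]
    nlinarith [mul_nonneg (Real.sqrt_nonneg x) (Real.sqrt_nonneg y)]
  · rw [Real.sqrt_eq_zero_of_nonpos hxy.le]
    positivity

noncomputable def fistaStep (p q x : ℝ) : ℝ := (p + √(q + 4 * x ^ 2)) / 2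

section fistaStep

variable {p q x : ℝ}

lemma add_half_le_fistaStep (hq : 0 ≤ q) : x + p / 2 ≤ fistaStep p q x := by
  have : 2 * x ≤ √(q + 4 * x ^ 2) := Real.le_sqrt_of_sq_le (by nlinarith)
  unfold fistaStep
  linarith

lemma fistaStep_le_add (hx : 0 ≤ x) : fistaStep p q x ≤ x + (p + √q) / 2 := by
  have : √(q + 4 * x ^ 2) ≤ √q + 2 * x := by
    calc √(q + 4 * x ^ 2) = √(q + (2 * x) ^ 2) := by ring_nf
      _ ≤ √q + √((2 * x) ^ 2) := Real.sqrt_add_le_add_sqrt _ _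
      _ = √q + 2 * x := by rw [Real.sqrt_sq (by linarith)]
  unfold fistaStep
  linarith

end fistaStep

section Increments

variable {u : ℕ → ℝ}

lemma tendsto_atTop_of_add_le_succ {c : ℝ} (hc : 0 < c) (h : ∀ k, u k + c ≤ u (k + 1)) :
    Tendsto u atTop atTop := by
  have hlin : ∀ k : ℕ, u 0 + k * c ≤ u k := by
    intro k
    induction k with
    | zero => simp
    | succ k ih => push_cast; linarith [h k]
  refine tendsto_atTop_mono hlin (tendsto_atTop_add_const_left _ _ ?_)
  exact tendsto_natCast_atTop_atTop.atTop_mul_const hc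

lemma tendsto_div_succ_of_abs_sub_le {C : ℝ} (hu : Tendsto u atTop atTop)
    (h : ∀ k, |u (k + 1) - u k| ≤ C) :
    Tendsto (fun k => u k / u (k + 1)) atTop (𝓝 1) := by
  have hu' : Tendsto (fun k => u (k + 1)) atTop atTop := hu.comp (tendsto_add_atTop_nat 1)
  have hsmall : Tendsto (fun k => (u (k + 1) - u k) / u (k + 1)) atTop (𝓝 0) := by
    refine squeeze_zero_norm' (a := fun k => C / u (k + 1)) ?_ (tendsto_const_nhds.div_atTop hu')
    filter_upwards [hu'.eventually_gt_atTop 0] with k hk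
    rw [Real.norm_eq_abs, abs_div, abs_of_pos hk]
    exact div_le_div_of_nonneg_right (h k) hk.le
  have hone : ∀ᶠ k in atTop, 1 - (u (k + 1) - u k) / u (k + 1) = u k / u (k + 1) := by
    filter_upwards [hu'.eventually_gt_atTop 0] with k hk
    field_simp
    ring
  simpa using (tendsto_const_nhds.sub hsmall).congr' hone

end Increments

theorem fista_a_tendsto_one (p q : ℝ) (hp : 0 < p) (hq : 0 < q)
    (t a : ℕ → ℝ) (ht0 : t 0 = 1)
    (hrec : ∀ k, t (k + 1) = (p + Real.sqrt (q + 4 * (t k) ^ 2)) / 2)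
    (ha : ∀ k, a (k + 1) = (t k - 1) / t (k + 1)) :
    Filter.Tendsto a Filter.atTop (nhds 1) := by
  have hstep : ∀ k, t (k + 1) = fistaStep p q (t k) := hrec
  have incr_lo : ∀ k, t k + p / 2 ≤ t (k + 1) := fun k =>
    (hstep k).symm ▸ add_half_le_fistaStep hq.le
  have one_le : ∀ k, 1 ≤ t k := by
    intro k
    induction k with
    | zero => exact ht0.ge
    | succ k ih => linarith [incr_lo k]
  have incr_hi : ∀ k, t (k + 1) ≤ t k + (p + √q) / 2 := fun k =>
    (hstep k).symm ▸ fistaStep_le_add (by linarith [one_le k])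
  have ht : Tendsto t atTop atTop := tendsto_atTop_of_add_le_succ (half_pos hp) incr_lo
  have hratio := tendsto_div_succ_of_abs_sub_le (C := (p + √q) / 2) ht fun k =>
    abs_le.mpr ⟨by linarith [incr_lo k, Real.sqrt_nonneg q], by linarith [incr_hi k]⟩
  have hinv : Tendsto (fun k => 1 / t (k + 1)) atTop (𝓝 0) :=
    tendsto_const_nhds.div_atTop (ht.comp (tendsto_add_atTop_nat 1))
  refine (tendsto_add_atTop_iff_nat 1).mp ?_
  simpa [ha, sub_div] using hratio.sub hinv
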